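/- Exchange is admissible in the multimodal natural deduction system: if Γ, φ@μ, ψ@ν, Δ ⊢ C @ p is derivable, then Γ, ψ@ν, φ@μ, Δ ⊢ C @ p is derivable. -/

import Mathlib

/-!
Multimodal intuitionistic logic (MTT's logical fragment), parametrized by a
mode theory, i.e. a strict 2-category `Md`: objects are modes, 1-cells are
modalities, 2-cells are transformations.
-/

open CategoryTheory

universe w v u

/-- Well-formed formulas of the multimodal logic, indexed by their mode. -/
inductive Fm (Md : Type u) [Bicategory.{w, v, u} Md] : Md → Type (max u v) where
  | pvar {m : Md} (i : ℕ) : Fm Md m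
  | tru {m : Md} : Fm Md m
  | fls {m : Md} : Fm Md m
  | conj {m : Md} : Fm Md m → Fm Md m → Fm Md m
  | disj {m : Md} : Fm Md m → Fm Md m → Fm Md m
  | impl {n m : Md} (μ : n ⟶ m) : Fm Md n → Fm Md m → Fm Md m
  | mod {n m : Md} (μ : n ⟶ m) : Fm Md n → Fm Md m

/-- (Pre-)contexts: `Cx Md a m` is a context whose base mode is `a` and whose
final (current) mode is `m`.  Extension tags a formula with a modality; a lock
`Γ,🔒_μ` for `μ : n ⟶ m` transports a context at mode `m` to one at mode `n`. -/
inductive Cx (Md : Type u) [Bicategory.{w, v, u} Md] : Md → Md → Type (max u v) where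
  | nil {m : Md} : Cx Md m m
  | ext {a n m : Md} : Cx Md a m → (n ⟶ m) → Fm Md n → Cx Md a m
  | lock {a n m : Md} : Cx Md a m → (n ⟶ m) → Cx Md a n

variable {Md : Type u} [Bicategory.{w, v, u} Md]

namespace Cx

/-- Concatenation of contexts: append the entries of the second to the first. -/
def append {a : Md} : {m p : Md} → Cx Md a m → Cx Md m p → Cx Md a p
  | _, _, Γ, .nil => Γ
  | _, _, Γ, .ext Δ μ φ => .ext (Γ.append Δ) μ φ
  | _, _, Γ, .lock Δ μ => .lock (Γ.append Δ) μ

/-- `locks Γ` is the composite of all the lock modalities occurring in `Γ`: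
`locks(·) = 1`, `locks(Γ, φ@μ) = locks(Γ)`, `locks(Γ,🔒_μ) = locks(Γ) ∘ μ`. -/
def locks : {a m : Md} → Cx Md a m → (m ⟶ a)
  | _, _, .nil => 𝟙 _
  | _, _, .ext Γ _ _ => Γ.locks
  | _, _, .lock Γ μ => μ ≫ Γ.locks

end Cx

/-- The identifications of contexts: the congruence generated by
`Γ,🔒_{1_m} = Γ` and `Γ,🔒_μ,🔒_ν = Γ,🔒_{μ∘ν}`. -/
inductive CxEq : {a m : Md} → Cx Md a m → Cx Md a m → Prop where
  | refl {a m : Md} (Γ : Cx Md a m) : CxEq Γ Γ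
  | symm {a m : Md} {Γ Δ : Cx Md a m} : CxEq Γ Δ → CxEq Δ Γ
  | trans {a m : Md} {Γ Δ Θ : Cx Md a m} : CxEq Γ Δ → CxEq Δ Θ → CxEq Γ Θ
  | ext {a n m : Md} {Γ Δ : Cx Md a m} (μ : n ⟶ m) (φ : Fm Md n) :
      CxEq Γ Δ → CxEq (Γ.ext μ φ) (Δ.ext μ φ)
  | lock {a n m : Md} {Γ Δ : Cx Md a m} (μ : n ⟶ m) :
      CxEq Γ Δ → CxEq (Γ.lock μ) (Δ.lock μ)
  | lock_id {a m : Md} (Γ : Cx Md a m) : CxEq (Γ.lock (𝟙 m)) Γ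
  | lock_comp {a o n m : Md} (Γ : Cx Md a m) (μ : n ⟶ m) (ν : o ⟶ n) :
      CxEq ((Γ.lock μ).lock ν) (Γ.lock (ν ≫ μ))

/-- The natural deduction system of the multimodal logic: `Der Γ φ` means
`Γ ⊢ φ @ m`.  Contexts are identified up to `CxEq` (rule `conv`). -/
inductive Der : {a m : Md} → Cx Md a m → Fm Md m → Prop where
  /-- Variable rule: from `μ : n ⟶ m` and a transformation `α : μ ⇒ locks(Δ)`
  infer `Γ, φ@μ, Δ ⊢ φ @ n`. -/
  | var {a m n : Md} (Γ : Cx Md a m) (μ : n ⟶ m) (φ : Fm Md n) (Δ : Cx Md m n)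
      (α : μ ⟶ Δ.locks) : Der ((Γ.ext μ φ).append Δ) φ
  | truI {a m : Md} (Γ : Cx Md a m) : Der Γ .tru
  | flsE {a m : Md} {Γ : Cx Md a m} {φ : Fm Md m} : Der Γ .fls → Der Γ φ
  | conjI {a m : Md} {Γ : Cx Md a m} {φ ψ : Fm Md m} :
      Der Γ φ → Der Γ ψ → Der Γ (φ.conj ψ)
  | conjE₁ {a m : Md} {Γ : Cx Md a m} {φ ψ : Fm Md m} : Der Γ (φ.conj ψ) → Der Γ φ
  | conjE₂ {a m : Md} {Γ : Cx Md a m} {φ ψ : Fm Md m} : Der Γ (φ.conj ψ) → Der Γ ψ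
  | disjI₁ {a m : Md} {Γ : Cx Md a m} {φ ψ : Fm Md m} : Der Γ φ → Der Γ (φ.disj ψ)
  | disjI₂ {a m : Md} {Γ : Cx Md a m} {φ ψ : Fm Md m} : Der Γ ψ → Der Γ (φ.disj ψ)
  | disjE {a m : Md} {Γ : Cx Md a m} {φ ψ χ : Fm Md m} :
      Der Γ (φ.disj ψ) → Der (Γ.ext (𝟙 m) φ) χ → Der (Γ.ext (𝟙 m) ψ) χ → Der Γ χ
  /-- Implication introduction. -/
  | implI {a n m : Md} {Γ : Cx Md a m} {μ : n ⟶ m} {φ : Fm Md n} {ψ : Fm Md m} :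
      Der (Γ.ext μ φ) ψ → Der Γ (.impl μ φ ψ)
  /-- Modal modus ponens. -/
  | implE {a n m : Md} {Γ : Cx Md a m} {μ : n ⟶ m} {φ : Fm Md n} {ψ : Fm Md m} :
      Der Γ (.impl μ φ ψ) → Der (Γ.lock μ) φ → Der Γ ψ
  /-- Modal introduction. -/
  | modI {a n m : Md} {Γ : Cx Md a m} {μ : n ⟶ m} {φ : Fm Md n} :
      Der (Γ.lock μ) φ → Der Γ (.mod μ φ)
  /-- Modal elimination. -/
  | modE {a o n m : Md} {Γ : Cx Md a m} {ν : o ⟶ n} {μ : n ⟶ m} {φ : Fm Md o}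
      {ψ : Fm Md m} :
      Der (Γ.lock μ) (.mod ν φ) → Der (Γ.ext (ν ≫ μ) φ) ψ → Der Γ ψ
  /-- Contexts are identified up to `CxEq`. -/
  | conv {a m : Md} {Γ Δ : Cx Md a m} {φ : Fm Md m} : CxEq Γ Δ → Der Γ φ → Der Δ φ


/-!
A derivation inspects its context only through the variable rule, which needs a hypothesis
`φ@μ` together with the composite of the locks to its right. Swapping two adjacent hypotheses
preserves all such pairs, and, the mode theory being strict, so do the identifications
`Γ,🔒_1 = Γ` and `Γ,🔒_μ,🔒_ν = Γ,🔒_{μ∘ν}`. An induction on derivations that carries the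
identifications made by `conv` along therefore transports every derivation across the swap.
-/

namespace Cx

@[simp] theorem append_nil {a m : Md} (Γ : Cx Md a m) : Γ.append .nil = Γ := by
  simp [append]

@[simp] theorem append_ext {a m p n : Md} (Γ : Cx Md a m) (Δ : Cx Md m p) (μ : n ⟶ p)
    (φ : Fm Md n) : Γ.append (Δ.ext μ φ) = (Γ.append Δ).ext μ φ := by
  simp [append]

@[simp] theorem append_lock {a m p n : Md} (Γ : Cx Md a m) (Δ : Cx Md m p) (μ : n ⟶ p) :
    Γ.append (Δ.lock μ) = (Γ.append Δ).lock μ := by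
  simp [append]

@[simp] theorem locks_nil {m : Md} : (nil : Cx Md m m).locks = 𝟙 m := by
  simp [locks]

@[simp] theorem locks_ext {a m n : Md} (Γ : Cx Md a m) (μ : n ⟶ m) (φ : Fm Md n) :
    (Γ.ext μ φ).locks = Γ.locks := by
  simp [locks]

@[simp] theorem locks_lock {a m n : Md} (Γ : Cx Md a m) (μ : n ⟶ m) :
    (Γ.lock μ).locks = μ ≫ Γ.locks := by
  simp [locks]

inductive Binds {a n m : Md} (μ : n ⟶ m) (φ : Fm Md n) : {p : Md} → Cx Md a p → (p ⟶ m) → Prop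
  | here (Γ : Cx Md a m) : Binds μ φ (Γ.ext μ φ) (𝟙 m)
  | ext {p k : Md} {Γ : Cx Md a p} {L : p ⟶ m} (κ : k ⟶ p) (θ : Fm Md k) :
      Binds μ φ Γ L → Binds μ φ (Γ.ext κ θ) L
  | lock {p q : Md} {Γ : Cx Md a p} {L : p ⟶ m} (κ : q ⟶ p) :
      Binds μ φ Γ L → Binds μ φ (Γ.lock κ) (κ ≫ L)

variable {a n m : Md} {μ : n ⟶ m} {φ : Fm Md n}

theorem binds_append (Γ : Cx Md a m) : ∀ {p : Md} (Δ : Cx Md m p),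
    Binds μ φ ((Γ.ext μ φ).append Δ) Δ.locks
  | _, .nil => by simpa using .here Γ
  | _, .ext Δ κ θ => by simpa using (binds_append Γ Δ).ext κ θ
  | _, .lock Δ κ => by simpa using (binds_append Γ Δ).lock κ

theorem Binds.exists_append {p : Md} {Θ : Cx Md a p} {L : p ⟶ m} (h : Binds μ φ Θ L) :
    ∃ (Γ : Cx Md a m) (Δ : Cx Md m p), Θ = (Γ.ext μ φ).append Δ ∧ Δ.locks = L := by
  induction h with
  | here Γ => exact ⟨Γ, .nil, by simp, by simp⟩
  | ext κ θ _ ih =>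
    obtain ⟨Γ, Δ, rfl, rfl⟩ := ih
    exact ⟨Γ, Δ.ext κ θ, by simp, by simp⟩
  | lock κ _ ih =>
    obtain ⟨Γ, Δ, rfl, rfl⟩ := ih
    exact ⟨Γ, Δ.lock κ, by simp, by simp⟩

theorem binds_iff_of_cxEq [Bicategory.Strict Md] {p : Md} {Θ Θ' : Cx Md a p}
    (h : CxEq Θ Θ') {L : p ⟶ m} : Binds μ φ Θ L ↔ Binds μ φ Θ' L := by
  induction h with
  | refl => rfl
  | symm _ ih => exact ih.symm
  | trans _ _ ih₁ ih₂ => exact ih₁.trans ih₂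
  | ext κ θ _ ih =>
    constructor <;> intro hb <;> cases hb with
    | here => exact .here _
    | ext _ _ hb => first | exact .ext κ θ (ih.1 hb) | exact .ext κ θ (ih.2 hb)
  | lock κ _ ih =>
    constructor <;> intro hb <;> cases hb with
    | lock _ hb => first | exact .lock κ (ih.1 hb) | exact .lock κ (ih.2 hb)
  | lock_id Γ =>
    constructor
    · intro hb
      cases hb with
      | lock _ hb => simpa using hb
    · intro hb
      simpa using hb.lock (𝟙 _)
  | lock_comp Γ κ ι =>
    constructor
    · intro hb
      cases hb with
      | lock _ hb => cases hb with
        | lock _ hb => simpa using hb.lock (ι ≫ κ)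
    · intro hb
      cases hb with
      | lock _ hb => simpa using (hb.lock κ).lock ι

inductive Swap : {p : Md} → Cx Md a p → Cx Md a p → Prop
  | swap {m n n' : Md} (Γ : Cx Md a m) (μ : n ⟶ m) (φ : Fm Md n) (ν : n' ⟶ m) (ψ : Fm Md n') :
      Swap ((Γ.ext μ φ).ext ν ψ) ((Γ.ext ν ψ).ext μ φ)
  | ext {p k : Md} {Θ Θ' : Cx Md a p} (κ : k ⟶ p) (θ : Fm Md k) :
      Swap Θ Θ' → Swap (Θ.ext κ θ) (Θ'.ext κ θ)
  | lock {p q : Md} {Θ Θ' : Cx Md a p} (κ : q ⟶ p) : Swap Θ Θ' → Swap (Θ.lock κ) (Θ'.lock κ)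

theorem Swap.append {Θ Θ' : Cx Md a m} (h : Swap Θ Θ') :
    ∀ {p : Md} (Δ : Cx Md m p), Swap (Θ.append Δ) (Θ'.append Δ)
  | _, .nil => by simpa using h
  | _, .ext Δ κ θ => by simpa using (h.append Δ).ext κ θ
  | _, .lock Δ κ => by simpa using (h.append Δ).lock κ

theorem Swap.binds {p : Md} {Θ Θ' : Cx Md a p} {L : p ⟶ m}
    (h : Swap Θ Θ') (hb : Binds μ φ Θ L) : Binds μ φ Θ' L := by
  induction h with
  | swap Γ μ' φ' ν ψ =>
    cases hb with
    | here => exact .ext μ' φ' (.here _)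
    | ext _ _ hb => cases hb with
      | here => exact .here _
      | ext _ _ hb => exact .ext _ _ (.ext _ _ hb)
  | ext κ θ _ ih =>
    cases hb with
    | here => exact .here _
    | ext _ _ hb => exact .ext κ θ (ih hb)
  | lock κ _ ih =>
    cases hb with
    | lock _ hb => exact .lock κ (ih hb)

end Cx

theorem Der.of_rel [Bicategory.Strict Md] {a : Md}
    (R : ∀ {p : Md}, Cx Md a p → Cx Md a p → Prop)
    (hext : ∀ {p k : Md} {Θ Θ' : Cx Md a p} (κ : k ⟶ p) (θ : Fm Md k),
      R Θ Θ' → R (Θ.ext κ θ) (Θ'.ext κ θ))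
    (hlock : ∀ {p q : Md} {Θ Θ' : Cx Md a p} (κ : q ⟶ p), R Θ Θ' → R (Θ.lock κ) (Θ'.lock κ))
    (hbinds : ∀ {n m p : Md} {μ : n ⟶ m} {φ : Fm Md n} {Θ Θ' : Cx Md a p} {L : p ⟶ m},
      R Θ Θ' → Cx.Binds μ φ Θ L → Cx.Binds μ φ Θ' L)
    {p : Md} {Θ Θ' : Cx Md a p} {C : Fm Md p} (h : Der Θ C) (hR : R Θ Θ') : Der Θ' C := by
  suffices ∀ {Ξ : Cx Md a p}, CxEq Θ Ξ → R Ξ Θ' → Der Θ' C from this (.refl Θ) hR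
  clear hR
  induction h with
  | var Γ μ φ Δ α =>
    intro Ξ hΞ hR
    obtain ⟨Γ', Δ', rfl, hL⟩ :=
      (hbinds hR (((Cx.binds_iff_of_cxEq hΞ).1 (Cx.binds_append Γ Δ)))).exists_append
    exact .var Γ' μ φ Δ' (α ≫ eqToHom hL.symm)
  | truI => intros; exact .truI _
  | flsE _ ih => intro Ξ hΞ hR; exact .flsE (ih hΞ hR)
  | conjI _ _ ih₁ ih₂ => intro Ξ hΞ hR; exact .conjI (ih₁ hΞ hR) (ih₂ hΞ hR)
  | conjE₁ _ ih => intro Ξ hΞ hR; exact .conjE₁ (ih hΞ hR)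
  | conjE₂ _ ih => intro Ξ hΞ hR; exact .conjE₂ (ih hΞ hR)
  | disjI₁ _ ih => intro Ξ hΞ hR; exact .disjI₁ (ih hΞ hR)
  | disjI₂ _ ih => intro Ξ hΞ hR; exact .disjI₂ (ih hΞ hR)
  | disjE _ _ _ ih ih₁ ih₂ =>
    intro Ξ hΞ hR
    exact .disjE (ih hΞ hR) (ih₁ (hΞ.ext _ _) (hext _ _ hR)) (ih₂ (hΞ.ext _ _) (hext _ _ hR))
  | implI _ ih => intro Ξ hΞ hR; exact .implI (ih (hΞ.ext _ _) (hext _ _ hR))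
  | implE _ _ ih₁ ih₂ => intro Ξ hΞ hR; exact .implE (ih₁ hΞ hR) (ih₂ (hΞ.lock _) (hlock _ hR))
  | modI _ ih => intro Ξ hΞ hR; exact .modI (ih (hΞ.lock _) (hlock _ hR))
  | modE _ _ ih₁ ih₂ =>
    intro Ξ hΞ hR
    exact .modE (ih₁ (hΞ.lock _) (hlock _ hR)) (ih₂ (hΞ.ext _ _) (hext _ _ hR))
  | conv hΓ _ ih => intro Ξ hΞ hR; exact ih (hΓ.trans hΞ) hR

/-- **Exchange** is admissible: if `Γ, φ@μ, ψ@ν, Δ ⊢ C @ p` then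
`Γ, ψ@ν, φ@μ, Δ ⊢ C @ p`. -/
theorem Der.exchange {Md : Type u} [Bicategory.{w, v, u} Md] [Bicategory.Strict Md]
    {a m n n' p : Md} (Γ : Cx Md a m) (μ : n ⟶ m) (φ : Fm Md n) (ν : n' ⟶ m)
    (ψ : Fm Md n') (Δ : Cx Md m p) (C : Fm Md p)
    (h : Der (((Γ.ext μ φ).ext ν ψ).append Δ) C) :
    Der (((Γ.ext ν ψ).ext μ φ).append Δ) C :=
  h.of_rel Cx.Swap .ext .lock Cx.Swap.binds ((Cx.Swap.swap Γ μ φ ν ψ).append Δ)
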